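/- Let τ = k₁T₁ + k₂T₂ with k₁,k₂ > 0, k₁+k₂=1, where T₁,T₂ are the first two jump times of a Poisson process with intensity λ. Then Z̃_τ = Z_τ = e^{-λk₁(T₂-T₁)} < 1 almost surely, and τ avoids F-stopping times; in particular τ is not an honest time. -/

import Mathlib

/-!
Given `F_t`, on `{t < T₂}` one only knows `T₁`, so independence and memorylessness of the
exponential gap `T₂ - T₁` give the explicit version
`Z_t = 1_{t < T₂} exp(-λ (k₁/k₂) (t - T₁)⁺)`; at `τ ∈ (T₁, T₂)` it equals
`exp(-λ k₁ (T₂ - T₁)) < 1`. As `τ` has no atoms, `Z̃_t` is a version of the same process, and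
continuity at `τ` transfers the values from rational times to `τ`.

On `{t < T₂}` every `F_t`-measurable variable is a function of `T₁`, whereas
`τ = T₁ + k₂ (T₂ - T₁)` agrees with a given function of `T₁` only on a null set, the gap being
independent of `T₁` and atomless. For a stopping time `T` and rational `q`, `min T q` is such a
function on `{q < T₂}`, and `τ < q < T₂` for some `q`, so `{τ = T}` is null; honesty at time `1`
would make `τ` a function of `T₁` on `{τ < 1 < T₂}`, an event of positive probability.
-/

open MeasureTheory ProbabilityTheory Set Filter Topology

instance (r : ℝ) : NullSingletonClass (expMeasure r) :=
  ⟨fun a => withDensity_absolutelyContinuous _ _ (measure_singleton a)⟩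

lemma measureReal_expMeasure_Ioi {r : ℝ} (hr : 0 < r) (x : ℝ) :
    (expMeasure r).real (Ioi x) = Real.exp (-(r * max x 0)) := by
  have := isProbabilityMeasure_expMeasure hr
  rw [measureReal_def, ← measure_cdf (expMeasure r),
    StieltjesFunction.measure_Ioi _ (tendsto_cdf_atTop _), cdf_expMeasure_eq hr]
  split_ifs with hx
  · rw [max_eq_left hx, sub_sub_cancel, ENNReal.toReal_ofReal (Real.exp_nonneg _)]
  · rw [max_eq_right (not_le.1 hx).le]
    simp

lemma expMeasure_Ioc_pos {r u v : ℝ} (hr : 0 < r) (hu : 0 ≤ u) (huv : u < v) :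
    0 < expMeasure r (Ioc u v) := by
  have := isProbabilityMeasure_expMeasure hr
  rw [← measure_cdf (expMeasure r), StieltjesFunction.measure_Ioc, cdf_expMeasure_eq hr,
    cdf_expMeasure_eq hr, if_pos hu, if_pos (hu.trans huv.le), ENNReal.ofReal_pos]
  have : Real.exp (-(r * v)) < Real.exp (-(r * u)) := Real.exp_lt_exp.2 (by nlinarith)
  linarith

/-- The rate `r / k₂` of `k₂ Y` splits as `r k₁ / k₂ + r`. -/
lemma measureReal_expMeasure_Ioi_div {r k₁ k₂ : ℝ} (hr : 0 < r) (hk₂ : 0 < k₂)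
    (hk : k₁ + k₂ = 1) (x : ℝ) :
    (expMeasure r).real (Ioi (x / k₂)) =
      Real.exp (-(r * k₁ / k₂) * max x 0) * (expMeasure r).real (Ioi x) := by
  have hmax : max (x / k₂) 0 = max x 0 / k₂ := by rw [← max_div_div_right hk₂.le, zero_div]
  rw [measureReal_expMeasure_Ioi hr, measureReal_expMeasure_Ioi hr, ← Real.exp_add, hmax]
  congr 1
  field_simp
  linear_combination max x 0 * hk

lemma integral_expMeasure_ite_lt_add {r k₁ k₂ : ℝ} (hr : 0 < r) (hk₂ : 0 < k₂)
    (hk : k₁ + k₂ = 1) (t x : ℝ) :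
    ∫ y, (if t < x + y then Real.exp (-(r * k₁ / k₂) * max (t - x) 0) else 0) ∂expMeasure r =
      ∫ y, (if t < x + k₂ * y then (1 : ℝ) else 0) ∂expMeasure r := by
  have h₁ : (fun y => if t < x + k₂ * y then (1 : ℝ) else 0) =
      (Ioi ((t - x) / k₂)).indicator 1 := by
    ext y
    simp only [indicator_apply, mem_Ioi, div_lt_iff₀ hk₂, Pi.one_apply]
    congr 1
    exact propext ⟨fun h => by linarith, fun h => by linarith⟩
  have h₂ : (fun y => if t < x + y then Real.exp (-(r * k₁ / k₂) * max (t - x) 0) else 0) =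
      (Ioi (t - x)).indicator fun _ => Real.exp (-(r * k₁ / k₂) * max (t - x) 0) := by
    ext y
    simp only [indicator_apply, mem_Ioi, sub_lt_iff_lt_add']
  rw [h₁, h₂, integral_indicator_one measurableSet_Ioi,
    integral_indicator_const _ measurableSet_Ioi, smul_eq_mul, mul_comm,
    measureReal_expMeasure_Ioi_div hr hk₂ hk]

lemma mem_Ioo_of_eq_convexComb {a b k₁ k₂ x : ℝ} (hk₁ : 0 < k₁) (hk₂ : 0 < k₂)
    (hk : k₁ + k₂ = 1) (hab : a < b) (hx : x = k₁ * a + k₂ * b) : x ∈ Ioo a b :=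
  openSegment_eq_Ioo hab ▸ ⟨k₁, k₂, hk₁, hk₂, hk, by simp [hx]⟩

lemma setOf_le_ae_eq_setOf_lt {Ω α : Type*} [MeasurableSpace Ω] {μ : Measure Ω}
    [PartialOrder α] {τ : Ω → α} {t : α} (h : μ {ω | τ ω = t} = 0) :
    {ω | t ≤ τ ω} =ᵐ[μ] {ω | t < τ ω} := by
  filter_upwards [measure_eq_zero_iff_ae_notMem.1 h] with ω hω
  exact propext ⟨fun h' => h'.lt_of_ne fun e => hω e.symm, le_of_lt⟩

lemma ae_forall_eq_of_continuousAt {Ω E : Type*} [MeasurableSpace Ω] {μ : Measure Ω}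
    [TopologicalSpace E] [T2Space E] {X Y : ℝ → Ω → E} (h : ∀ t, X t =ᵐ[μ] Y t) :
    ∀ᵐ ω ∂μ, ∀ t, ContinuousAt (fun s => X s ω) t → ContinuousAt (fun s => Y s ω) t →
      X t ω = Y t ω := by
  filter_upwards [ae_all_iff.2 fun q : ℚ => h q] with ω hω t hX hY
  have := Rat.denseRange_cast (𝕜 := ℝ) |>.nhdsWithin_neBot t
  have hrat : ∀ s ∈ range ((↑) : ℚ → ℝ), X s ω = Y s ω := by
    rintro _ ⟨q, rfl⟩
    exact hω q
  exact tendsto_nhds_unique ((hX.tendsto.mono_left nhdsWithin_le_nhds).congr'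
    (eventually_nhdsWithin_of_forall hrat))
    (hY.tendsto.mono_left nhdsWithin_le_nhds)

lemma measurable_min_const_of_measurableSet_le {Ω : Type*} {m : MeasurableSpace Ω}
    {X : Ω → ℝ} {t : ℝ} (h : ∀ s < t, MeasurableSet[m] {ω | X ω ≤ s}) :
    Measurable[m] fun ω => min (X ω) t := by
  refine measurable_of_Iic fun s => ?_
  rcases lt_or_ge s t with hst | hts
  · convert h s hst using 1
    ext ω
    simp [hst.not_ge]
  · convert MeasurableSet.univ
    ext ω
    simp [hts]

lemma setIntegral_eq_of_inter_eq {α E : Type*} [MeasurableSpace α] {μ : Measure α}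
    [NormedAddCommGroup E] [NormedSpace ℝ E] {f : α → E} {A B S : Set α}
    (hA : MeasurableSet A) (hB : MeasurableSet B) (hAB : A ∩ S = B ∩ S)
    (hf : ∀ x ∉ S, f x = 0) : ∫ x in A, f x ∂μ = ∫ x in B, f x ∂μ := by
  have key : ∀ {A : Set α}, MeasurableSet A → ∫ x in A, f x ∂μ = ∫ x in A ∩ S, f x ∂μ :=
    fun hA => setIntegral_eq_of_subset_of_forall_sdiff_eq_zero hA inter_subset_left
      fun x hx => hf x fun hxS => hx.2 ⟨hx.1, hxS⟩
  rw [key hA, key hB, hAB]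

section Independence

variable {Ω α : Type*} [MeasurableSpace Ω] [MeasurableSpace α] {μ : Measure Ω}
  [IsFiniteMeasure μ] {X : Ω → α}

lemma ProbabilityTheory.IndepFun.measure_eq_comp_eq_zero {Y : Ω → ℝ} (hX : Measurable X)
    (hY : Measurable Y) (hXY : IndepFun X Y μ) [NullSingletonClass (μ.map Y)] {h : α → ℝ}
    (hh : Measurable h) :
    μ {ω | Y ω = h (X ω)} = 0 := by
  have hs : MeasurableSet {p : α × ℝ | p.2 = h p.1} :=
    measurableSet_eq_fun measurable_snd (hh.comp measurable_fst)
  rw [show {ω | Y ω = h (X ω)} = (fun ω => (X ω, Y ω)) ⁻¹' {p | p.2 = h p.1} from rfl,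
    ← Measure.map_apply (hX.prodMk hY) hs,
    (indepFun_iff_map_prod_eq_prod_map_map hX.aemeasurable hY.aemeasurable).1 hXY,
    Measure.prod_apply hs]
  simp

lemma ProbabilityTheory.IndepFun.setIntegral_preimage_eq {β : Type*} [MeasurableSpace β]
    {Y : Ω → β} (hX : Measurable X) (hY : Measurable Y) (hXY : IndepFun X Y μ) {G : α × β → ℝ}
    (hG : Integrable G ((μ.map X).prod (μ.map Y))) {C : Set α} (hC : MeasurableSet C) :
    ∫ ω in X ⁻¹' C, G (X ω, Y ω) ∂μ = ∫ x in C, ∫ y, G (x, y) ∂(μ.map Y) ∂(μ.map X) := by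
  have hmap := (indepFun_iff_map_prod_eq_prod_map_map hX.aemeasurable hY.aemeasurable).1 hXY
  calc ∫ ω in X ⁻¹' C, G (X ω, Y ω) ∂μ
      = ∫ p in C ×ˢ univ, G p ∂(μ.map fun ω => (X ω, Y ω)) := by
        rw [setIntegral_map (hC.prod MeasurableSet.univ) (hmap ▸ hG.aestronglyMeasurable)
          (hX.prodMk hY).aemeasurable, mk_preimage_prod, preimage_univ, inter_univ]
    _ = ∫ x in C, ∫ y, G (x, y) ∂(μ.map Y) ∂(μ.map X) := by
        rw [hmap, setIntegral_prod _ hG.integrableOn, Measure.restrict_univ]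

end Independence

section TwoJumps

variable {Ω : Type*} {T₁ T₂ : Ω → ℝ}

noncomputable def twoJumpCount (T₁ T₂ : Ω → ℝ) (t : ℝ) (ω : Ω) : ℝ :=
  (if T₁ ω ≤ t then 1 else 0) + (if T₂ ω ≤ t then 1 else 0)

@[reducible] noncomputable def twoJumpFiltration (T₁ T₂ : Ω → ℝ) (t : ℝ) : MeasurableSpace Ω :=
  ⨆ s ∈ Icc (0 : ℝ) t, MeasurableSpace.comap (twoJumpCount T₁ T₂ s) inferInstance

lemma twoJumpCount_eq_zero_iff {ω : Ω} (h : T₁ ω < T₂ ω) (s : ℝ) :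
    twoJumpCount T₁ T₂ s ω = 0 ↔ s < T₁ ω := by
  unfold twoJumpCount
  split_ifs <;> norm_num <;> linarith

lemma twoJumpCount_eq_two_iff {ω : Ω} (h : T₁ ω < T₂ ω) (s : ℝ) :
    twoJumpCount T₁ T₂ s ω = 2 ↔ T₂ ω ≤ s := by
  unfold twoJumpCount
  split_ifs <;> norm_num <;> linarith

lemma twoJumpFiltration_mono : Monotone (twoJumpFiltration T₁ T₂) :=
  fun _ _ hst => biSup_mono fun _ hs => ⟨hs.1, hs.2.trans hst⟩

lemma measurable_twoJumpCount_of_mem_Icc {s t : ℝ} (hs : s ∈ Icc 0 t) :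
    Measurable[twoJumpFiltration T₁ T₂ t] (twoJumpCount T₁ T₂ s) :=
  Measurable.of_comap_le <| le_iSup₂
    (f := fun s (_ : s ∈ Icc (0 : ℝ) t) => MeasurableSpace.comap (twoJumpCount T₁ T₂ s) _) s hs

lemma twoJumpFiltration_le [MeasurableSpace Ω] (hT₁ : Measurable T₁) (hT₂ : Measurable T₂)
    (t : ℝ) : twoJumpFiltration T₁ T₂ t ≤ ‹MeasurableSpace Ω› :=
  iSup₂_le fun _ _ => Measurable.comap_le <|
    (Measurable.ite (measurableSet_le hT₁ measurable_const) measurable_const measurable_const).add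
      (Measurable.ite (measurableSet_le hT₂ measurable_const) measurable_const measurable_const)

/-- Up to time `t` the counting process only sees `T₁` and `T₂` censored at `t`, the value
`t + 1` coding `T₂ > t`. -/
lemma twoJumpFiltration_le_comap (t : ℝ) :
    twoJumpFiltration T₁ T₂ t ≤
      MeasurableSpace.comap (fun ω => (T₁ ω, if T₂ ω ≤ t then T₂ ω else t + 1)) inferInstance := by
  refine iSup₂_le fun s hs => ?_
  have hcount : twoJumpCount T₁ T₂ s =
      (fun p : ℝ × ℝ => (if p.1 ≤ s then (1 : ℝ) else 0) + (if p.2 ≤ s then 1 else 0)) ∘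
        fun ω => (T₁ ω, if T₂ ω ≤ t then T₂ ω else t + 1) := by
    funext ω
    simp only [twoJumpCount, Function.comp_apply]
    congr 1
    split_ifs <;> first | rfl | linarith [hs.2]
  rw [hcount]
  refine (Measurable.comp ?_ (comap_measurable _)).comap_le
  exact (Measurable.ite (measurableSet_le measurable_fst measurable_const) measurable_const
    measurable_const).add
      (Measurable.ite (measurableSet_le measurable_snd measurable_const) measurable_const
        measurable_const)

lemma exists_inter_eq_preimage_inter {t : ℝ} {A : Set Ω}
    (hA : MeasurableSet[twoJumpFiltration T₁ T₂ t] A) :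
    ∃ C : Set ℝ, MeasurableSet C ∧
      A ∩ {ω | t < T₂ ω} = T₁ ⁻¹' C ∩ {ω | t < T₂ ω} := by
  obtain ⟨B, hB, rfl⟩ := twoJumpFiltration_le_comap t A hA
  refine ⟨(fun x => (x, t + 1)) ⁻¹' B, measurable_prodMk_right hB, ?_⟩
  ext ω
  simp only [mem_inter_iff, mem_preimage]
  exact and_congr_left fun h => by rw [if_neg h.not_ge]

lemma exists_eq_comp_of_measurable_twoJumpFiltration {t : ℝ} {f : Ω → ℝ}
    (hf : Measurable[twoJumpFiltration T₁ T₂ t] f) :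
    ∃ g : ℝ → ℝ, Measurable g ∧ ∀ ω, t < T₂ ω → f ω = g (T₁ ω) := by
  obtain ⟨h, hh, rfl⟩ :=
    (hf.mono (twoJumpFiltration_le_comap t) le_rfl).exists_eq_measurable_comp
  exact ⟨fun x => h (x, t + 1), hh.comp measurable_prodMk_right,
    fun ω hω => by simp [hω.not_ge]⟩

lemma measurableSet_le_fst (hpos : ∀ ω, 0 < T₁ ω) (hlt : ∀ ω, T₁ ω < T₂ ω) {s t : ℝ}
    (hst : s ≤ t) :
    MeasurableSet[twoJumpFiltration T₁ T₂ t] {ω | T₁ ω ≤ s} := by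
  rcases lt_or_ge s 0 with hs | hs
  · convert MeasurableSet.empty
    ext ω
    simpa using hs.trans (hpos ω)
  · convert (measurable_twoJumpCount_of_mem_Icc ⟨hs, hst⟩ (measurableSet_singleton 0)).compl
      using 1
    ext ω
    simp [twoJumpCount_eq_zero_iff (hlt ω)]

lemma measurableSet_lt_snd (hpos : ∀ ω, 0 < T₁ ω) (hlt : ∀ ω, T₁ ω < T₂ ω) (t : ℝ) :
    MeasurableSet[twoJumpFiltration T₁ T₂ t] {ω | t < T₂ ω} := by
  rcases lt_or_ge t 0 with ht | ht
  · convert MeasurableSet.univ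
    ext ω
    simpa using ht.trans ((hpos ω).trans (hlt ω))
  · convert (measurable_twoJumpCount_of_mem_Icc ⟨ht, le_rfl⟩ (measurableSet_singleton 2)).compl
      using 1
    ext ω
    simp [twoJumpCount_eq_two_iff (hlt ω)]

noncomputable def azemaSupermartingale (c : ℝ) (T₁ T₂ : Ω → ℝ) (t : ℝ) (ω : Ω) : ℝ :=
  if t < T₂ ω then Real.exp (-c * max (t - T₁ ω) 0) else 0

lemma measurable_azemaSupermartingale (hpos : ∀ ω, 0 < T₁ ω) (hlt : ∀ ω, T₁ ω < T₂ ω) (c t : ℝ) :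
    Measurable[twoJumpFiltration T₁ T₂ t] (azemaSupermartingale c T₁ T₂ t) := by
  have hmin : Measurable[twoJumpFiltration T₁ T₂ t] fun ω => min (T₁ ω) t :=
    measurable_min_const_of_measurableSet_le fun _ hs => measurableSet_le_fst hpos hlt hs.le
  have hmax (ω : Ω) : max (t - T₁ ω) 0 = t - min (T₁ ω) t := by
    rw [← max_sub_sub_left, sub_self]
  refine Measurable.ite (measurableSet_lt_snd hpos hlt t) ?_ measurable_const
  simp only [hmax]
  exact Real.measurable_exp.comp ((measurable_const.sub hmin).const_mul (-c))

lemma abs_azemaSupermartingale_le_one {c : ℝ} (hc : 0 ≤ c) (t : ℝ) (ω : Ω) :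
    |azemaSupermartingale c T₁ T₂ t ω| ≤ 1 := by
  unfold azemaSupermartingale
  split_ifs
  · rw [abs_of_pos (Real.exp_pos _), Real.exp_le_one_iff]
    nlinarith [le_max_right (t - T₁ ω) 0]
  · simp

lemma azemaSupermartingale_eq_of_mem_Ioo {c t : ℝ} {ω : Ω} (h : t ∈ Ioo (T₁ ω) (T₂ ω)) :
    azemaSupermartingale c T₁ T₂ t ω = Real.exp (-c * (t - T₁ ω)) := by
  rw [azemaSupermartingale, if_pos h.2, max_eq_left (sub_nonneg.2 h.1.le)]

lemma continuousAt_azemaSupermartingale {c t : ℝ} {ω : Ω} (h : t ∈ Ioo (T₁ ω) (T₂ ω)) :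
    ContinuousAt (fun s => azemaSupermartingale c T₁ T₂ s ω) t :=
  (by fun_prop : Continuous fun s => Real.exp (-c * (s - T₁ ω))).continuousAt.congr <|
    eventually_of_mem (isOpen_Ioo.mem_nhds h) fun _ hs =>
      (azemaSupermartingale_eq_of_mem_Ioo hs).symm

lemma azemaSupermartingale_convexComb {lam k₁ k₂ t : ℝ} (hk₁ : 0 < k₁) (hk₂ : 0 < k₂)
    (hk : k₁ + k₂ = 1) {ω : Ω} (hlt : T₁ ω < T₂ ω) (ht : t = k₁ * T₁ ω + k₂ * T₂ ω) :
    azemaSupermartingale (lam * k₁ / k₂) T₁ T₂ t ω = Real.exp (-lam * k₁ * (T₂ ω - T₁ ω)) := by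
  rw [azemaSupermartingale_eq_of_mem_Ioo (mem_Ioo_of_eq_convexComb hk₁ hk₂ hk hlt ht), ht]
  congr 1
  field_simp
  linear_combination -lam * T₁ ω * hk

end TwoJumps

section ConvexCombination

variable {Ω : Type*} [MeasurableSpace Ω] {μ : Measure Ω} {lam k₁ k₂ : ℝ} {T₁ T₂ τ : Ω → ℝ}

lemma setIntegral_preimage_azemaSupermartingale [IsFiniteMeasure μ] (hlam : 0 < lam)
    (hk₁ : 0 ≤ k₁) (hk₂ : 0 < k₂) (hk : k₁ + k₂ = 1) (hT₁ : Measurable T₁)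
    (hT₂ : Measurable T₂) (hgap : μ.map (fun ω => T₂ ω - T₁ ω) = expMeasure lam)
    (hindep : IndepFun T₁ (fun ω => T₂ ω - T₁ ω) μ) (hτ : ∀ ω, τ ω = k₁ * T₁ ω + k₂ * T₂ ω)
    (t : ℝ) {C : Set ℝ} (hC : MeasurableSet C) :
    ∫ ω in T₁ ⁻¹' C, azemaSupermartingale (lam * k₁ / k₂) T₁ T₂ t ω ∂μ =
      ∫ ω in T₁ ⁻¹' C, {ω | t < τ ω}.indicator (fun _ => (1 : ℝ)) ω ∂μ := by
  have hc : 0 ≤ lam * k₁ / k₂ := by positivity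
  set G₁ : ℝ × ℝ → ℝ := fun p => if t < p.1 + k₂ * p.2 then 1 else 0
  set G₂ : ℝ × ℝ → ℝ := fun p =>
    if t < p.1 + p.2 then Real.exp (-(lam * k₁ / k₂) * max (t - p.1) 0) else 0
  have hG₁ : Integrable G₁ ((μ.map T₁).prod (μ.map fun ω => T₂ ω - T₁ ω)) := by
    refine .of_bound (Measurable.aestronglyMeasurable ?_) 1 (ae_of_all _ fun p => ?_)
    · exact Measurable.ite (measurableSet_lt measurable_const (by fun_prop)) measurable_const
        measurable_const
    · simp only [G₁]
      split_ifs <;> simp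
  have hG₂ : Integrable G₂ ((μ.map T₁).prod (μ.map fun ω => T₂ ω - T₁ ω)) := by
    refine .of_bound (Measurable.aestronglyMeasurable ?_) 1 (ae_of_all _ fun p => ?_)
    · exact Measurable.ite (measurableSet_lt measurable_const (by fun_prop)) (by fun_prop)
        measurable_const
    · simp only [G₂]
      split_ifs
      · rw [Real.norm_of_nonneg (Real.exp_pos _).le, Real.exp_le_one_iff]
        nlinarith [le_max_right (t - p.1) 0]
      · simp
  have hY : Measurable fun ω => T₂ ω - T₁ ω := hT₂.sub hT₁
  calc ∫ ω in T₁ ⁻¹' C, azemaSupermartingale (lam * k₁ / k₂) T₁ T₂ t ω ∂μ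
      = ∫ ω in T₁ ⁻¹' C, G₂ (T₁ ω, T₂ ω - T₁ ω) ∂μ := by
        simp only [G₂, azemaSupermartingale, add_sub_cancel]
    _ = ∫ ω in T₁ ⁻¹' C, G₁ (T₁ ω, T₂ ω - T₁ ω) ∂μ := by
        rw [hindep.setIntegral_preimage_eq hT₁ hY hG₂ hC,
          hindep.setIntegral_preimage_eq hT₁ hY hG₁ hC, hgap]
        simp only [G₁, G₂, integral_expMeasure_ite_lt_add hlam hk₂ hk]
    _ = ∫ ω in T₁ ⁻¹' C, {ω | t < τ ω}.indicator (fun _ => (1 : ℝ)) ω ∂μ := by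
        have hτ' (ω : Ω) : τ ω = T₁ ω + k₂ * (T₂ ω - T₁ ω) := by
          rw [hτ]
          linear_combination T₁ ω * hk
        simp only [G₁, indicator_apply, mem_ofPred_eq, hτ']

theorem azemaSupermartingale_ae_eq_condExp [IsFiniteMeasure μ] (hlam : 0 < lam) (hk₁ : 0 < k₁)
    (hk₂ : 0 < k₂) (hk : k₁ + k₂ = 1) (hT₁ : Measurable T₁) (hT₂ : Measurable T₂)
    (hpos : ∀ ω, 0 < T₁ ω) (hlt : ∀ ω, T₁ ω < T₂ ω)
    (hgap : μ.map (fun ω => T₂ ω - T₁ ω) = expMeasure lam)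
    (hindep : IndepFun T₁ (fun ω => T₂ ω - T₁ ω) μ) (hτ : ∀ ω, τ ω = k₁ * T₁ ω + k₂ * T₂ ω)
    (t : ℝ) :
    azemaSupermartingale (lam * k₁ / k₂) T₁ T₂ t =ᵐ[μ]
      μ[{ω | t < τ ω}.indicator (fun _ => (1 : ℝ)) | twoJumpFiltration T₁ T₂ t] := by
  have hm := twoJumpFiltration_le hT₁ hT₂ t
  have hZ := measurable_azemaSupermartingale hpos hlt (lam * k₁ / k₂) t
  have hZint : Integrable (azemaSupermartingale (lam * k₁ / k₂) T₁ T₂ t) μ :=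
    .of_bound (hZ.mono hm le_rfl).aestronglyMeasurable 1 <| ae_of_all _
      (abs_azemaSupermartingale_le_one (by positivity) t)
  have hτm : MeasurableSet {ω | t < τ ω} := by
    simp only [hτ]
    exact measurableSet_lt measurable_const (by fun_prop)
  have hτT₂ (ω : Ω) : τ ω < T₂ ω := (mem_Ioo_of_eq_convexComb hk₁ hk₂ hk (hlt ω) (hτ ω)).2
  refine ae_eq_condExp_of_forall_setIntegral_eq hm ((integrable_const 1).indicator hτm)
    (fun _ _ _ => hZint.integrableOn) (fun A hA _ => ?_) hZ.stronglyMeasurable.aestronglyMeasurable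
  obtain ⟨C, hC, hAC⟩ := exists_inter_eq_preimage_inter hA
  have hZ₀ : ∀ ω ∉ {ω | t < T₂ ω}, azemaSupermartingale (lam * k₁ / k₂) T₁ T₂ t ω = 0 :=
    fun _ hω => if_neg hω
  have h₀ : ∀ ω ∉ {ω | t < T₂ ω}, {ω | t < τ ω}.indicator (fun _ => (1 : ℝ)) ω = 0 :=
    fun ω hω => indicator_of_notMem (fun h => hω (h.trans (hτT₂ ω))) _
  rw [setIntegral_eq_of_inter_eq (hm A hA) (hT₁ hC) hAC hZ₀,
    setIntegral_eq_of_inter_eq (hm A hA) (hT₁ hC) hAC h₀]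
  exact setIntegral_preimage_azemaSupermartingale hlam hk₁.le hk₂ hk hT₁ hT₂ hgap hindep hτ t hC

lemma measure_convexComb_eq_comp_eq_zero [IsFiniteMeasure μ] (hk₂ : k₂ ≠ 0) (hk : k₁ + k₂ = 1)
    (hT₁ : Measurable T₁) (hT₂ : Measurable T₂)
    [NullSingletonClass (μ.map fun ω => T₂ ω - T₁ ω)]
    (hindep : IndepFun T₁ (fun ω => T₂ ω - T₁ ω) μ) (hτ : ∀ ω, τ ω = k₁ * T₁ ω + k₂ * T₂ ω)
    {h : ℝ → ℝ} (hh : Measurable h) : μ {ω | τ ω = h (T₁ ω)} = 0 := by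
  refine measure_mono_null (fun ω hω => ?_) (hindep.measure_eq_comp_eq_zero hT₁ (hT₂.sub hT₁)
    ((hh.sub measurable_id).div_const k₂))
  change τ ω = h (T₁ ω) at hω
  change T₂ ω - T₁ ω = (h (T₁ ω) - T₁ ω) / k₂
  rw [← hω, hτ ω]
  field_simp
  linear_combination -T₁ ω * hk

lemma measure_convexComb_lt_lt_pos (hlam : 0 < lam) (hk₁ : 0 < k₁) (hk₂ : 0 < k₂) (hk : k₁ + k₂ = 1)
    (hT₁ : Measurable T₁) (hT₂ : Measurable T₂) (hd₁ : μ.map T₁ = expMeasure lam)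
    (hgap : μ.map (fun ω => T₂ ω - T₁ ω) = expMeasure lam)
    (hindep : IndepFun T₁ (fun ω => T₂ ω - T₁ ω) μ) (hτ : ∀ ω, τ ω = k₁ * T₁ ω + k₂ * T₂ ω)
    {t : ℝ} (ht : 0 < t) : 0 < μ {ω | τ ω < t ∧ t < T₂ ω} := by
  have hY : Measurable fun ω => T₂ ω - T₁ ω := hT₂.sub hT₁
  set I := Ioc 0 (t * k₁ / 4)
  set J := Ioc t (t * (1 + k₂) / (2 * k₂))
  have hsub : T₁ ⁻¹' I ∩ (fun ω => T₂ ω - T₁ ω) ⁻¹' J ⊆ {ω | τ ω < t ∧ t < T₂ ω} := by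
    rintro ω ⟨⟨hx₀, hx⟩, hy₀, hy⟩
    rw [le_div_iff₀ (by positivity)] at hy
    constructor <;> nlinarith [hτ ω]
  refine lt_of_lt_of_le ?_ (measure_mono hsub)
  rw [hindep.measure_inter_preimage_eq_mul _ _ measurableSet_Ioc measurableSet_Ioc,
    ← Measure.map_apply hT₁ measurableSet_Ioc, ← Measure.map_apply hY measurableSet_Ioc,
    hd₁, hgap]
  refine ENNReal.mul_pos (expMeasure_Ioc_pos hlam le_rfl (by positivity)).ne'
    (expMeasure_Ioc_pos hlam ht.le ?_).ne'
  rw [lt_div_iff₀ (by positivity)]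
  nlinarith

lemma measure_eq_stoppingTime_eq_zero {T : Ω → ℝ} (hτT₂ : ∀ ω, τ ω < T₂ ω)
    (hnull : ∀ h : ℝ → ℝ, Measurable h → μ {ω | τ ω = h (T₁ ω)} = 0)
    (hT : ∀ t, MeasurableSet[twoJumpFiltration T₁ T₂ t] {ω | T ω ≤ t}) :
    μ {ω | τ ω = T ω} = 0 := by
  have hstopped (q : ℚ) : ∃ g : ℝ → ℝ, Measurable g ∧
      ∀ ω, (q : ℝ) < T₂ ω → min (T ω) q = g (T₁ ω) :=
    exists_eq_comp_of_measurable_twoJumpFiltration <| measurable_min_const_of_measurableSet_le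
      fun s hs => twoJumpFiltration_mono hs.le _ (hT s)
  choose g hg hTg using hstopped
  refine measure_mono_null (fun ω hω => ?_) (measure_iUnion_null fun q => hnull (g q) (hg q))
  obtain ⟨q, hτq, hqT₂⟩ := exists_rat_btwn (hτT₂ ω)
  refine mem_iUnion.2 ⟨q, ?_⟩
  simp only [mem_ofPred_eq] at hω ⊢
  rw [← hTg q ω hqT₂, ← hω, min_eq_left hτq.le]

lemma measure_lt_lt_eq_zero_of_eq_measurable {τt : Ω → ℝ} {t : ℝ}
    (hnull : ∀ h : ℝ → ℝ, Measurable h → μ {ω | τ ω = h (T₁ ω)} = 0)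
    (hτt : Measurable[twoJumpFiltration T₁ T₂ t] τt) (heq : ∀ ω, τ ω < t → τ ω = τt ω) :
    μ {ω | τ ω < t ∧ t < T₂ ω} = 0 := by
  obtain ⟨g, hg, hτtg⟩ := exists_eq_comp_of_measurable_twoJumpFiltration hτt
  exact measure_mono_null (fun ω ⟨hτω, hT₂ω⟩ => (heq ω hτω).trans (hτtg ω hT₂ω)) (hnull g hg)

end ConvexCombination

theorem convex_combination_not_honest_general {Ω : Type*} [MeasurableSpace Ω]
    (μ : Measure Ω) [IsProbabilityMeasure μ] (lam k₁ k₂ : ℝ) (hlam : 0 < lam)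
    (hk₁ : 0 < k₁) (hk₂ : 0 < k₂) (hk : k₁ + k₂ = 1)
    (T₁ T₂ : Ω → ℝ) (hT₁m : Measurable T₁) (hT₂m : Measurable T₂)
    (hpos : ∀ ω, 0 < T₁ ω ∧ T₁ ω < T₂ ω)
    (hd1 : Measure.map T₁ μ = expMeasure lam)
    (hd2 : Measure.map (fun ω => T₂ ω - T₁ ω) μ = expMeasure lam)
    (hindep : IndepFun T₁ (fun ω => T₂ ω - T₁ ω) μ)
    (N : ℝ → Ω → ℝ)
    (hN : ∀ t ω, N t ω = (if T₁ ω ≤ t then 1 else 0) + (if T₂ ω ≤ t then 1 else 0))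
    (F : ℝ → MeasurableSpace Ω)
    (hF : ∀ t, F t = ⨆ s ∈ Set.Icc (0 : ℝ) t, MeasurableSpace.comap (N s) inferInstance)
    (τ : Ω → ℝ) (hτ : ∀ ω, τ ω = k₁ * T₁ ω + k₂ * T₂ ω)
    (Z Ztilde : ℝ → Ω → ℝ)
    (hZver : ∀ t, Z t =ᵐ[μ]
      μ[Set.indicator {ω | t < τ ω} (fun _ => (1 : ℝ)) | F t])
    (hZtver : ∀ t, Ztilde t =ᵐ[μ]
      μ[Set.indicator {ω | t ≤ τ ω} (fun _ => (1 : ℝ)) | F t])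
    -- regular versions: right-continuity and continuity at `τ`
    (hregτ : ∀ᵐ ω ∂μ, ContinuousAt (fun s => Z s ω) (τ ω) ∧
      ContinuousAt (fun s => Ztilde s ω) (τ ω)) :
    (∀ᵐ ω ∂μ, Ztilde (τ ω) ω = Z (τ ω) ω ∧
      Z (τ ω) ω = Real.exp (-lam * k₁ * (T₂ ω - T₁ ω)) ∧ Z (τ ω) ω < 1) ∧
    (∀ T : Ω → ℝ, (∀ t : ℝ, MeasurableSet[F t] {ω | T ω ≤ t}) →
      μ {ω | τ ω = T ω} = 0) ∧
    ¬ (∀ t : ℝ, ∃ τt : Ω → ℝ,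
        Measurable[F t] τt ∧ ∀ ω, τ ω < t → τ ω = τt ω) := by
  obtain rfl : N = twoJumpCount T₁ T₂ := funext fun t => funext (hN t)
  obtain rfl : F = twoJumpFiltration T₁ T₂ := funext hF
  have hτmem (ω : Ω) : τ ω ∈ Ioo (T₁ ω) (T₂ ω) :=
    mem_Ioo_of_eq_convexComb hk₁ hk₂ hk (hpos ω).2 (hτ ω)
  have : NullSingletonClass (μ.map fun ω => T₂ ω - T₁ ω) := hd2 ▸ inferInstance
  have hnull (h : ℝ → ℝ) (hh : Measurable h) : μ {ω | τ ω = h (T₁ ω)} = 0 :=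
    measure_convexComb_eq_comp_eq_zero hk₂.ne' hk hT₁m hT₂m hindep hτ hh
  have hcond := azemaSupermartingale_ae_eq_condExp hlam hk₁ hk₂ hk hT₁m hT₂m (fun ω => (hpos ω).1)
    (fun ω => (hpos ω).2) hd2 hindep hτ
  have hZ (t : ℝ) := (hZver t).trans (hcond t).symm
  have hZt (t : ℝ) := (hZtver t).trans <| (condExp_congr_ae <| indicator_ae_eq_of_ae_eq_set <|
    setOf_le_ae_eq_setOf_lt (hnull _ measurable_const)).trans (hcond t).symm
  refine ⟨?_, fun T hT => measure_eq_stoppingTime_eq_zero (fun ω => (hτmem ω).2) hnull hT,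
    fun hhonest => ?_⟩
  · filter_upwards [ae_forall_eq_of_continuousAt hZ, ae_forall_eq_of_continuousAt hZt, hregτ]
      with ω hZω hZtω ⟨hZc, hZtc⟩
    have hSc := continuousAt_azemaSupermartingale (c := lam * k₁ / k₂) (hτmem ω)
    rw [hZω _ hZc hSc, hZtω _ hZtc hSc,
      azemaSupermartingale_convexComb hk₁ hk₂ hk (hpos ω).2 (hτ ω)]
    refine ⟨rfl, rfl, Real.exp_lt_one_iff.2 ?_⟩
    nlinarith [mul_pos (mul_pos hlam hk₁) (sub_pos.2 (hpos ω).2)]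
  · obtain ⟨τ₁, hτ₁, hττ₁⟩ := hhonest 1
    exact (measure_convexComb_lt_lt_pos hlam hk₁ hk₂ hk hT₁m hT₂m hd1 hd2 hindep hτ one_pos).ne'
      (measure_lt_lt_eq_zero_of_eq_measurable hnull hτ₁ hττ₁)

/-- For `τ = k₁T₁ + k₂T₂` (`k₁,k₂ > 0`, `k₁+k₂ = 1`, `T₁,T₂` the first two jump times
of a Poisson process with intensity `λ`): `Z̃_τ = Z_τ = e^{-λk₁(T₂-T₁)} < 1` a.s.,
`τ` avoids `F`-stopping times, and `τ` is not an honest time. -/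
theorem convex_combination_not_honest {Ω : Type*} [MeasurableSpace Ω]
    (μ : Measure Ω) [IsProbabilityMeasure μ] (lam k₁ k₂ : ℝ) (hlam : 0 < lam)
    (hk₁ : 0 < k₁) (hk₂ : 0 < k₂) (hk : k₁ + k₂ = 1)
    (T₁ T₂ : Ω → ℝ) (hT₁m : Measurable T₁) (hT₂m : Measurable T₂)
    (hpos : ∀ ω, 0 < T₁ ω ∧ T₁ ω < T₂ ω)
    (hd1 : Measure.map T₁ μ = expMeasure lam)
    (hd2 : Measure.map (fun ω => T₂ ω - T₁ ω) μ = expMeasure lam)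
    (hindep : IndepFun T₁ (fun ω => T₂ ω - T₁ ω) μ)
    (N : ℝ → Ω → ℝ)
    (hN : ∀ t ω, N t ω = (if T₁ ω ≤ t then 1 else 0) + (if T₂ ω ≤ t then 1 else 0))
    (F : ℝ → MeasurableSpace Ω)
    (hF : ∀ t, F t = ⨆ s ∈ Set.Icc (0 : ℝ) t, MeasurableSpace.comap (N s) inferInstance)
    (τ : Ω → ℝ) (hτ : ∀ ω, τ ω = k₁ * T₁ ω + k₂ * T₂ ω)
    (Z Ztilde : ℝ → Ω → ℝ)
    (hZver : ∀ t, Z t =ᵐ[μ]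
      μ[Set.indicator {ω | t < τ ω} (fun _ => (1 : ℝ)) | F t])
    (hZtver : ∀ t, Ztilde t =ᵐ[μ]
      μ[Set.indicator {ω | t ≤ τ ω} (fun _ => (1 : ℝ)) | F t])
    -- regular versions: right-continuity and continuity at `τ`
    (hregZ : ∀ᵐ ω ∂μ, ∀ t : ℝ, ContinuousWithinAt (fun s => Z s ω) (Set.Ici t) t)
    (hregZt : ∀ᵐ ω ∂μ, ∀ t : ℝ, ContinuousWithinAt (fun s => Ztilde s ω) (Set.Iic t) t)
    (hregτ : ∀ᵐ ω ∂μ, ContinuousAt (fun s => Z s ω) (τ ω) ∧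
      ContinuousAt (fun s => Ztilde s ω) (τ ω)) :
    (∀ᵐ ω ∂μ, Ztilde (τ ω) ω = Z (τ ω) ω ∧
      Z (τ ω) ω = Real.exp (-lam * k₁ * (T₂ ω - T₁ ω)) ∧ Z (τ ω) ω < 1) ∧
    (∀ T : Ω → ℝ, (∀ t : ℝ, MeasurableSet[F t] {ω | T ω ≤ t}) →
      μ {ω | τ ω = T ω} = 0) ∧
    ¬ (∀ t : ℝ, ∃ τt : Ω → ℝ,
        Measurable[F t] τt ∧ ∀ ω, τ ω < t → τ ω = τt ω) :=
  convex_combination_not_honest_general μ lam k₁ k₂ hlam hk₁ hk₂ hk T₁ T₂ hT₁m hT₂m hpos hd1 hd2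
    hindep N hN F hF τ hτ Z Ztilde hZver hZtver hregτ
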